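/- Let (t, d) be a labeled plane tree, list its vertices in lexicographic order as v_0 = ∅, v_1, …, v_{|t|−1} with v_{|t|} := v_0, and set α_t = 2 + max over 0 ≤ i < |t| of dist_t(v_i, v_{i+1}). Then sup over 0 ≤ s ≤ 1 of |Z_t(s) − S_t(φ_t(s))| ≤ max{ |ℓ(u) − ℓ(v)| : u, v ∈ V(t), dist_t(u, v) ≤ α_t }. -/

import Mathlib

open MeasureTheory Filter Topology
open scoped ENNReal NNReal Classical

noncomputable section

namespace TreeSym

/-- Ulam–Harris words over the positive integers. -/
abbrev Vertex : Type := List ℕ+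

instance : MeasurableSpace Vertex := ⊤
instance : MeasurableSpace (Finset Vertex) := ⊤

/-- A finite set of Ulam–Harris words is (the vertex set of) a rooted plane tree if it contains
the empty word, is prefix-closed, and is closed under decreasing the last letter. -/
def IsPlaneTreeSet (t : Finset Vertex) : Prop :=
  ([] : Vertex) ∈ t ∧
  (∀ v ∈ t, ∀ u : Vertex, u <+: v → u ∈ t) ∧
  (∀ v : Vertex, ∀ i j : ℕ+, v ++ [i] ∈ t → j ≤ i → v ++ [j] ∈ t)

/-- The number of children of `v` in the vertex set `t`. -/
def nChild (t : Finset Vertex) (v : Vertex) : ℕ :=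
  (t.filter fun w => ∃ i : ℕ+, w = v ++ [i]).card

/-- Length of the longest common prefix of two words. -/
def lcpLen : Vertex → Vertex → ℕ
  | a :: u, b :: v => if a = b then lcpLen u v + 1 else 0
  | _, _ => 0

/-- The graph distance between two vertices of a plane tree. -/
def treeDist (u v : Vertex) : ℕ := u.length + v.length - 2 * lcpLen u v

/-- History of the contour exploration of the plane tree with vertex set `t`
(most recently visited vertex first). -/
def contourHist (t : Finset Vertex) : ℕ → List Vertex
  | 0 => [([] : Vertex)]
  | n + 1 =>
    let h := contourHist t n
    let cur := h.headI
    if (∃ m : ℕ, cur ++ [m.succPNat] ∈ t ∧ cur ++ [m.succPNat] ∉ h) then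
      (cur ++ [(sInf {m : ℕ | cur ++ [m.succPNat] ∈ t ∧ cur ++ [m.succPNat] ∉ h}).succPNat]) :: h
    else
      cur.dropLast :: h

/-- The contour exploration `θ_t`. -/
def theta (t : Finset Vertex) (i : ℕ) : Vertex := (contourHist t i).headI

/-- Piecewise linear interpolation: `interpFun n f (i/n) = f i` for `0 ≤ i ≤ n`, linear in
between. -/
def interpFun (n : ℕ) (f : ℕ → ℝ) (s : ℝ) : ℝ :=
  f 0 + ∑ k ∈ Finset.range n, (f (k + 1) - f k) * max 0 (min 1 (s * n - k))

lemma continuous_interpFun (n : ℕ) (f : ℕ → ℝ) : Continuous (interpFun n f) := by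
  unfold interpFun
  refine continuous_const.add (continuous_finset_sum _ fun k _ => continuous_const.mul ?_)
  exact continuous_const.max (continuous_const.min
    ((continuous_id.mul continuous_const).sub continuous_const))

/-- Piecewise linear interpolation, as a continuous map on `[0,1]`. -/
def interpMap (n : ℕ) (f : ℕ → ℝ) : C(unitInterval, ℝ) :=
  ⟨fun s => interpFun n f s, (continuous_interpFun n f).comp continuous_subtype_val⟩

/-- A multitype labeled plane tree with type space `S`: a finite set of Ulam–Harris words,
together with a type and a displacement (the label increment along the edge to the parent)
attached to each word. -/
structure MTree (S : Type*) where
  verts : Finset Vertex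
  type : Vertex → S
  disp : Vertex → ℝ

/-- The underlying vertex set is a plane tree. -/
def MTree.IsPlaneTree {S : Type*} (T : MTree S) : Prop := IsPlaneTreeSet T.verts

instance {S : Type*} [MeasurableSpace S] : MeasurableSpace (MTree S) :=
  MeasurableSpace.comap (fun T => (T.verts, T.type, T.disp)) inferInstance

/-- The label of a vertex: the sum of the displacements along the path from the root. -/
def labelOf {S : Type*} (T : MTree S) (v : Vertex) : ℝ :=
  ∑ j ∈ Finset.range v.length, T.disp (v.take (j + 1))

/-- The contour process, as a function on `ℝ`. -/
def contourFun {S : Type*} (T : MTree S) (s : ℝ) : ℝ :=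
  interpFun (2 * T.verts.card - 2) (fun i => ((theta T.verts i).length : ℝ)) s

/-- The label process, as a function on `ℝ`. -/
def labelFun {S : Type*} (T : MTree S) (s : ℝ) : ℝ :=
  interpFun (2 * T.verts.card - 2) (fun i => labelOf T (theta T.verts i)) s

/-- The contour process `C` of a tree, as a continuous map on `[0,1]`. -/
def contourProcess {S : Type*} (T : MTree S) : C(unitInterval, ℝ) :=
  interpMap (2 * T.verts.card - 2) fun i => ((theta T.verts i).length : ℝ)

/-- The label process `Z` of a labeled tree, as a continuous map on `[0,1]`. -/
def labelProcess {S : Type*} (T : MTree S) : C(unitInterval, ℝ) :=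
  interpMap (2 * T.verts.card - 2) fun i => labelOf T (theta T.verts i)

/-- The process `Λ^{(q)}` counting visited vertices of type `q` along the contour. -/
def lambdaProcess {S : Type*} (q : S) (T : MTree S) : C(unitInterval, ℝ) :=
  interpMap (2 * T.verts.card - 2) fun i =>
    (((Finset.range i).filter fun j => T.type (theta T.verts j) = q).card : ℝ)

/-! ### Symmetrization -/

/-- A vector of permutations, one for each potential vertex. -/
abbrev PermVec : Type := Vertex → Equiv.Perm ℕ+

/-- Relabel a word according to a permutation vector, the permutation used at each level being
the one attached to the (original) prefix. -/
def permWordAux (σ : PermVec) : Vertex → Vertex → Vertex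
  | _, [] => []
  | p, i :: rest => σ p i :: permWordAux σ (p ++ [i]) rest

def permWord (σ : PermVec) (v : Vertex) : Vertex := permWordAux σ [] v

/-- The inverse relabeling. -/
def invWordAux (σ : PermVec) : Vertex → Vertex → Vertex
  | _, [] => []
  | p, j :: rest => (σ p)⁻¹ j :: invWordAux σ (p ++ [(σ p)⁻¹ j]) rest

def invWord (σ : PermVec) (w : Vertex) : Vertex := invWordAux σ [] w

/-- Apply a permutation vector to a labeled multitype tree: children are reordered at every
vertex, types and displacements following their vertices and edges. -/
def permApply {S : Type*} (σ : PermVec) (T : MTree S) : MTree S :=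
  ⟨T.verts.image (permWord σ), fun w => T.type (invWord σ w), fun w => T.disp (invWord σ w)⟩

/-- The set `P_t` of admissible permutation vectors for `T`: at a vertex with `k` children the
permutation fixes everything above `k` and permutes `{1,…,k}`; away from the tree it is the
identity. -/
def PermSet {S : Type*} (T : MTree S) : Set PermVec :=
  {σ | (∀ v ∈ T.verts,
          (∀ i : ℕ+, (i : ℕ) ≤ nChild T.verts v → ((σ v i : ℕ) ≤ nChild T.verts v)) ∧
          (∀ i : ℕ+, nChild T.verts v < (i : ℕ) → σ v i = i)) ∧
        ∀ v ∉ T.verts, σ v = 1}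

/-- The law of the symmetrization of the (deterministic) tree `T`: the uniform average of the
point masses at `σ(T)`, `σ ∈ P_T`. -/
def symKernel {S : Type*} [MeasurableSpace S] (T : MTree S) : Measure (MTree S) :=
  ((PermSet T).ncard : ℝ≥0∞)⁻¹ •
    Measure.sum (fun σ : ↥(PermSet T) => Measure.dirac (permApply (σ : PermVec) T))

/-- The symmetrization `ν^sym` of a law `ν` on labeled multitype plane trees. -/
def symLaw {S : Type*} [MeasurableSpace S] (ν : Measure (MTree S)) : Measure (MTree S) :=
  ν.bind symKernel

/-- A law is symmetric if it is equal to its symmetrization. -/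
def IsSymmetricLaw {S : Type*} [MeasurableSpace S] (ν : Measure (MTree S)) : Prop :=
  symLaw ν = ν

/-! ### Valid laws -/

/-- Forget the displacements of a labeled tree. -/
def shape {S : Type*} (T : MTree S) : MTree S := ⟨T.verts, T.type, fun _ => 0⟩

/-- The vector of displacements from `v` to its (first `k`) children. -/
def dispVecAt {S : Type*} (T : MTree S) (v : Vertex) (k : ℕ) : Fin k → ℝ :=
  fun i => T.disp (v ++ [(i : ℕ).succPNat])

/-- The child type vector of `v` (with `k` children). -/
def ctypeAt {S : Type*} (T : MTree S) (v : Vertex) (k : ℕ) : Fin k → S :=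
  fun i => T.type (v ++ [(i : ℕ).succPNat])

/-- A family of displacement distributions: for each parent type and each child type vector of
each length `k`, a measure on `ℝ^k`. -/
abbrev DispFamily (S : Type*) : Type _ :=
  S → (k : ℕ) → (Fin k → S) → Measure (Fin k → ℝ)

/-- `ν` has displacement family `π`: conditionally on the underlying typed tree, the displacement
vectors at the vertices are independent, with laws given by `π` evaluated at the type of a vertex
and its child type vector. -/
def HasDispFamily {S : Type*} [MeasurableSpace S] (ν : Measure (MTree S))
    (π : DispFamily S) : Prop :=
  (∀ r k s, IsProbabilityMeasure (π r k s)) ∧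
  ∀ t : MTree S, ∀ B : (v : Vertex) → Set (Fin (nChild t.verts v) → ℝ),
    (∀ v, MeasurableSet (B v)) →
    ν {T | shape T = shape t ∧ ∀ v ∈ t.verts, dispVecAt T v (nChild t.verts v) ∈ B v}
      = ν {T | shape T = shape t}
        * ∏ v ∈ t.verts, π (t.type v) (nChild t.verts v) (ctypeAt t v (nChild t.verts v)) (B v)

/-- A law on labeled multitype plane trees is valid if it is carried by plane trees, the law of
the underlying typed plane tree is symmetric, and the displacements admit a displacement family
as above. -/
def IsValidLaw {S : Type*} [MeasurableSpace S] (ν : Measure (MTree S)) : Prop :=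
  ν {T | ¬ T.IsPlaneTree} = 0 ∧ IsSymmetricLaw (ν.map shape) ∧ ∃ π : DispFamily S, HasDispFamily ν π

/-! ### Convergence in distribution -/

/-- Convergence in distribution of a sequence of random elements (defined on possibly different
probability spaces) towards a limiting random element: the expectations of every bounded
continuous functional converge. -/
def TendstoInDist {Ω : ℕ → Type*} [∀ n, MeasurableSpace (Ω n)]
    (P : ∀ n, Measure (Ω n)) {E : Type*} [TopologicalSpace E] (X : ∀ n, Ω n → E)
    {Ω₀ : Type*} [MeasurableSpace Ω₀] (P₀ : Measure Ω₀) (Y : Ω₀ → E) : Prop :=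
  ∀ f : BoundedContinuousFunction E ℝ,
    Tendsto (fun n => ∫ ω, f (X n ω) ∂(P n)) atTop (𝓝 (∫ ω, f (Y ω) ∂P₀))

/-- Tightness of a family of laws of random elements of a topological space. -/
def TightSeq {E : Type*} [TopologicalSpace E] {Ω : ℕ → Type*} [∀ n, MeasurableSpace (Ω n)]
    (P : ∀ n, Measure (Ω n)) (X : ∀ n, Ω n → E) : Prop :=
  ∀ ε : ℝ≥0∞, 0 < ε → ∃ K : Set E, IsCompact K ∧ ∀ n, P n {ω | X n ω ∉ K} ≤ ε

/-! ### Galton–Watson laws -/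

instance {S : Type*} [MeasurableSpace S] : MeasurableSpace (List S) := ⊤

/-- The child type vector of `v`, as a list. -/
def ctypeList {S : Type*} (T : MTree S) (v : Vertex) : List S :=
  (List.range (nChild T.verts v)).map fun m => T.type (v ++ [m.succPNat])

/-- `ν` is the law of a multitype Galton–Watson tree with offspring distributions `p`:
the `p s` are permutation-invariant probability measures on finite type sequences, and the
probability that the typed tree equals a given finite plane tree `t` is the product over the
vertices of `t` of the offspring probabilities of the child type vectors (times the probability
of the root type). -/
def IsGWLaw {S : Type*} [MeasurableSpace S] (ν : Measure (MTree S))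
    (p : S → Measure (List S)) : Prop :=
  (∀ s, IsProbabilityMeasure (p s)) ∧
  (∀ s : S, ∀ l l' : List S, l.Perm l' → p s {l} = p s {l'}) ∧
  ∀ t : MTree S, t.IsPlaneTree →
    ν {T | T.verts = t.verts ∧ ∀ v ∈ t.verts, T.type v = t.type v}
      = ν {T | T.type [] = t.type []} * ∏ v ∈ t.verts, p (t.type v) {ctypeList t v}

/-- A tree is normalized if its type and displacement functions take default values off the
vertex set, and (for unlabeled trees) all displacements vanish. -/
def Normalized {S : Type*} (s₀ : S) (T : MTree S) : Prop :=
  (∀ v ∉ T.verts, T.type v = s₀) ∧ T.disp = fun _ => 0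

/-! ### Displacement families: symmetrization and centering -/

/-- The symmetrized displacement family `π^{sym}` defined by
`π^{u,sym}_s(B) = (1/k!) ∑_{σ ∈ 𝔖_k} π^u_{σ(s)}(σ(B))`. -/
def symFamily {S : Type*} (π : DispFamily S) : DispFamily S := fun r k s =>
  ((Nat.factorial k : ℝ≥0∞))⁻¹ •
    ∑ σ : Equiv.Perm (Fin k),
      (π r k fun j => s (σ.symm j)).map fun x : Fin k → ℝ => fun j => x (σ j)

/-- A displacement family is locally centered if every coordinate of every displacement
distribution has mean zero. -/
def LocallyCentered {S : Type*} (π : DispFamily S) : Prop :=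
  ∀ (r : S) (k : ℕ) (s : Fin k → S) (i : Fin k), (∫ x, x i ∂(π r k s)) = 0

/-- A displacement family is centered if, for every `k`, every parent type `r` and every vector
`z` of type counts summing to `k`, the sum over all ordered child type sequences with counts `z`
of the total mean displacement is zero. -/
def Centered {S : Type*} (π : DispFamily S) : Prop :=
  ∀ (k : ℕ) (r : S) (z : S →₀ ℕ), (z.sum fun _ n => n) = k →
    (∑ᶠ s ∈ {s : Fin k → S | ∀ x : S,
        ((Finset.univ.filter fun i => s i = x).card = z x)},
      ∑ i : Fin k, ∫ x, x i ∂(π r k s)) = 0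

/-! ### Subtrees spanned by finitely many vertices -/

/-- The vertex set of the subtree spanned by the vertices `r i` and their ancestors. -/
def spanVerts {k : ℕ} (r : Fin k → Vertex) : Finset Vertex :=
  insert ([] : Vertex) (Finset.univ.biUnion fun i => ((r i).inits).toFinset)

/-- The rank of the child index `i` of `p` among the child indices present in `s`. -/
def childRank (s : Finset Vertex) (p : Vertex) (i : ℕ+) : ℕ+ :=
  ((s.filter fun w => ∃ j : ℕ+, j ≤ i ∧ w = p ++ [j]).card).toPNat'

def reindexAux (s : Finset Vertex) : Vertex → Vertex → Vertex
  | _, [] => []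
  | p, i :: rest => childRank s p i :: reindexAux s (p ++ [i]) rest

/-- The Ulam–Harris label, in the plane tree with vertex set `s`, of the node corresponding to
the vertex `v ∈ s`: children are relabeled consecutively, preserving their order. -/
def reindex (s : Finset Vertex) (v : Vertex) : Vertex := reindexAux s [] v

/-- The set of child indices of `p` present in `s`. -/
def childIdxs (s : Finset Vertex) (p : Vertex) : Finset ℕ+ :=
  (s.filter fun w => ∃ i : ℕ+, w = p ++ [i]).image fun w => w.getLastD 1

/-- The `m`-th smallest child index of `p` present in `s`. -/
def nthChildIndex (s : Finset Vertex) (p : Vertex) (m : ℕ+) : ℕ+ :=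
  ((childIdxs s p).sort (· ≤ ·)).getD ((m : ℕ) - 1) 1

def unIndexAux (s : Finset Vertex) : Vertex → Vertex → Vertex
  | _, [] => []
  | p, m :: rest =>
      nthChildIndex s p m :: unIndexAux s (p ++ [nthChildIndex s p m]) rest

/-- The inverse of `reindex s`. -/
def unIndex (s : Finset Vertex) (w : Vertex) : Vertex := unIndexAux s [] w

/-- The labeled subtree of `T` with vertex set `s ⊆ T.verts`, viewed as a plane tree (with the
plane structure, the types and the displacements inherited from `T`). -/
def spanTree {S : Type*} (T : MTree S) (s : Finset Vertex) : MTree S :=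
  ⟨s.image (reindex s), fun w => T.type (unIndex s w), fun w => T.disp (unIndex s w)⟩

/-- The labeled subtree of `T` with vertex set `s`, with the displacements on child edges of
branchpoints replaced by `0` (the modified labeling `d⟨·⟩`). -/
def spanTreeMod {S : Type*} (T : MTree S) (s : Finset Vertex) : MTree S :=
  ⟨(spanTree T s).verts, (spanTree T s).type,
    fun w => if nChild (spanTree T s).verts w.dropLast = 1 then (spanTree T s).disp w else 0⟩

/-- `R` is a uniform sample of `k` vertices from the random labeled tree `X`: conditionally on
`X`, the coordinates of `R` are independent and uniformly distributed on the vertex set of `X`. -/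
def UniformSample {Ω : Type*} [MeasurableSpace Ω] (P : Measure Ω) {S : Type*} [MeasurableSpace S]
    (X : Ω → MTree S) {k : ℕ} (R : Ω → Fin k → Vertex) : Prop :=
  ∀ A : Set (MTree S), MeasurableSet A → ∀ r : Fin k → Vertex,
    P {ω | X ω ∈ A ∧ R ω = r}
      = ∫⁻ ω in {ω | X ω ∈ A},
          (if ∀ i, r i ∈ (X ω).verts then (((X ω).verts.card : ℝ≥0∞) ^ k)⁻¹ else 0) ∂P

/-! ### Lexicographic enumeration, height process -/

/-- The vertices of `t` in lexicographic order. -/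
def lexEnum (t : Finset Vertex) : List Vertex := t.sort (· ≤ ·)

/-- The `i`-th vertex in lexicographic order (`v_{|t|} = v_0` by convention, since `v_0` is the
root `[]`, which is also the default value). -/
def lexVertex (t : Finset Vertex) (i : ℕ) : Vertex := (lexEnum t).getD i []

/-- The height process `H_t`, as a function on `ℝ`. -/
def heightFun {S : Type*} (T : MTree S) (s : ℝ) : ℝ :=
  interpFun T.verts.card (fun i => ((lexVertex T.verts i).length : ℝ)) s

/-- The lexicographic label process `S_t`, as a function on `ℝ`. -/
def lexLabelFun {S : Type*} (T : MTree S) (s : ℝ) : ℝ :=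
  interpFun T.verts.card (fun i => labelOf T (lexVertex T.verts i)) s

/-- The height process `H_t`, as a continuous map on `[0,1]`. -/
def heightProcess {S : Type*} (T : MTree S) : C(unitInterval, ℝ) :=
  interpMap T.verts.card fun i => ((lexVertex T.verts i).length : ℝ)

/-- The lexicographic label process `S_t`, as a continuous map on `[0,1]`. -/
def lexLabelProcess {S : Type*} (T : MTree S) : C(unitInterval, ℝ) :=
  interpMap T.verts.card fun i => labelOf T (lexVertex T.verts i)

/-- `j_t(i) = 2i - h(v_i)` for `i < |t|`, and `j_t(i) = 2|t| - 2` otherwise. -/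
def jIdx (t : Finset Vertex) (i : ℕ) : ℕ :=
  if i < t.card then 2 * i - (lexVertex t i).length else 2 * t.card - 2

/-- `φ_t(s) = |t|⁻¹ · sup {i ≤ |t| : j_t(i) ≤ s(2|t|-2)}`. -/
def phi (t : Finset Vertex) (s : ℝ) : ℝ :=
  ((sSup {i : ℕ | i ≤ t.card ∧ (jIdx t i : ℝ) ≤ s * (2 * t.card - 2)} : ℕ) : ℝ) / t.card

/-- The increasing reordering of the finite vector `f`. -/
def sortFun {k : ℕ} (f : Fin k → ℝ) (i : ℕ) : ℝ :=
  ((List.ofFn f).insertionSort (· ≤ ·)).getD i 0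

instance : MeasurableSpace C(unitInterval, ℝ) := borel _

/-!
The contour exploration moves along one edge per step and is at `v_i` at time `j_t(i)`: between
`j_t(i)` and `j_t(i+1)` it climbs from `v_i` to the ancestor `p` of which `v_{i+1}` is a child,
then steps down to `v_{i+1}`, so `j_t(i+1) ≤ j_t(i) + 2 + dist_t(v_i, v_{i+1})`. The definition
of `φ_t` selects the `i` with `j_t(i) ≤ s(2|t|-2) < j_t(i+1)`, so that `S_t(φ_t(s)) = ℓ(v_i)`,
while `Z_t(s)` is a convex combination of the labels of the contour at the integer times next to
`s(2|t|-2)`, which lie within distance `α_t` of `v_i`.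
-/

lemma le_of_isPrefix {u v : Vertex} (h : u <+: v) : u ≤ v := not_lt.mp h.le

lemma le_nil_iff {u : Vertex} : u ≤ [] ↔ u = [] :=
  ⟨fun h => le_antisymm h (le_of_isPrefix List.nil_prefix), fun h => h ▸ le_rfl⟩

lemma cons_of_isPrefix_cons {q : Vertex} {a : ℕ+} {v : Vertex} (hq : q <+: a :: v)
    (hlen : 0 < q.length) : ∃ q', q = a :: q' ∧ q' <+: v := by
  rcases List.prefix_cons_iff.1 hq with rfl | h
  · simp at hlen
  · exact h

lemma exists_branch_of_lt : ∀ {v w : Vertex}, v < w →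
    ∃ p y, p <+: v ∧ p ++ [y] <+: w ∧ v < p ++ [y] ∧
      ∀ q, q <+: v → p.length < q.length → ∀ c, q ++ [c] < p ++ [y]
  | _, [], h => absurd h (List.not_lt_nil _)
  | [], b :: _, _ => ⟨[], b, List.nil_prefix, by simp, List.nil_lt_cons _ _,
      fun q hq hlen => by simp [List.prefix_nil.1 hq] at hlen⟩
  | a :: v, b :: w, h => by
    rcases List.cons_lt_cons_iff.1 h with hab | ⟨rfl, hvw⟩
    · refine ⟨[], b, List.nil_prefix, by simp, List.cons_lt_cons_iff.2 (Or.inl hab),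
        fun q hq hlen c => ?_⟩
      obtain ⟨q', rfl, -⟩ := cons_of_isPrefix_cons hq hlen
      exact List.cons_lt_cons_iff.2 (Or.inl hab)
    · obtain ⟨p, y, hp, hpw, hvp, hbranch⟩ := exists_branch_of_lt hvw
      refine ⟨a :: p, y, List.cons_prefix_cons.2 ⟨rfl, hp⟩, List.cons_prefix_cons.2 ⟨rfl, hpw⟩,
        List.cons_lt_cons_iff.2 (Or.inr ⟨rfl, hvp⟩), fun q hq hlen c => ?_⟩
      obtain ⟨q', rfl, hq'⟩ := cons_of_isPrefix_cons hq (by omega)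
      exact List.cons_lt_cons_iff.2
        (Or.inr ⟨rfl, hbranch q' hq' (by simpa using hlen) c⟩)

lemma lcpLen_comm : ∀ u v : Vertex, lcpLen u v = lcpLen v u
  | [], [] | [], _ :: _ | _ :: _, [] => rfl
  | a :: u, b :: v => by
    by_cases h : a = b
    · simp [lcpLen, h, lcpLen_comm u v]
    · simp [lcpLen, h, Ne.symm h]

lemma lcpLen_le_length : ∀ u v : Vertex, lcpLen u v ≤ u.length
  | [], _ | _ :: _, [] => Nat.zero_le _
  | a :: u, b :: v => by
    simp only [lcpLen, List.length_cons]
    split_ifs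
    · exact Nat.succ_le_succ (lcpLen_le_length u v)
    · exact Nat.zero_le _

lemma lcpLen_le_length_right (u v : Vertex) : lcpLen u v ≤ v.length :=
  lcpLen_comm u v ▸ lcpLen_le_length v u

lemma min_lcpLen_le_lcpLen : ∀ u w v : Vertex, min (lcpLen u w) (lcpLen w v) ≤ lcpLen u v
  | [], _, _ | _ :: _, [], _ | _ :: _, _ :: _, [] => by simp [lcpLen]
  | a :: u, b :: w, c :: v => by
    have := min_lcpLen_le_lcpLen u w v
    simp only [lcpLen]
    split_ifs <;> simp_all

lemma lcpLen_append_right (p r : Vertex) : lcpLen p (p ++ r) = p.length := by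
  induction p with
  | nil => cases r <;> rfl
  | cons a p ih => simp [lcpLen, ih]

lemma treeDist_comm (u v : Vertex) : treeDist u v = treeDist v u := by
  rw [treeDist, treeDist, lcpLen_comm, Nat.add_comm u.length]

lemma treeDist_triangle (u w v : Vertex) : treeDist u v ≤ treeDist u w + treeDist w v := by
  have := lcpLen_le_length u w
  have := lcpLen_le_length_right u w
  have := lcpLen_le_length w v
  have := lcpLen_le_length_right w v
  have := lcpLen_le_length u v
  have := min_lcpLen_le_lcpLen u w v
  simp only [treeDist]
  omega

lemma treeDist_append_right (p r : Vertex) : treeDist p (p ++ r) = r.length := by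
  simp only [treeDist, lcpLen_append_right, List.length_append]
  omega

lemma treeDist_self (u : Vertex) : treeDist u u = 0 := by
  simpa using treeDist_append_right u []

lemma treeDist_nil_right (u : Vertex) : treeDist u [] = u.length := by
  rw [treeDist_comm]; exact treeDist_append_right [] u

lemma treeDist_dropLast_le (u : Vertex) : treeDist u u.dropLast ≤ 1 := by
  rcases List.eq_nil_or_concat u with rfl | ⟨q, x, rfl⟩
  · simp [treeDist_self]
  · rw [List.concat_eq_append, List.dropLast_concat, treeDist_comm, treeDist_append_right]
    rfl

lemma theta_mem_contourHist (t : Finset Vertex) (m : ℕ) : theta t m ∈ contourHist t m := by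
  cases m with
  | zero => simp [theta, contourHist]
  | succ m =>
    rw [theta, contourHist]
    split_ifs <;> simp

lemma contourHist_succ_of_forall_mem {t : Finset Vertex} {m : ℕ}
    (h : ∀ c : ℕ+, theta t m ++ [c] ∈ t → theta t m ++ [c] ∈ contourHist t m) :
    contourHist t (m + 1) = (theta t m).dropLast :: contourHist t m := by
  rw [contourHist, if_neg]
  · rfl
  · rintro ⟨k, hk, hk'⟩
    exact hk' (h _ hk)

lemma contourHist_succ_of_isLeast {t : Finset Vertex} {m : ℕ} {y : ℕ+}
    (hy : theta t m ++ [y] ∈ t) (hy' : theta t m ++ [y] ∉ contourHist t m)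
    (hlt : ∀ z < y, theta t m ++ [z] ∈ t → theta t m ++ [z] ∈ contourHist t m) :
    contourHist t (m + 1) = (theta t m ++ [y]) :: contourHist t m := by
  have hleast : IsLeast {k : ℕ | theta t m ++ [k.succPNat] ∈ t ∧
      theta t m ++ [k.succPNat] ∉ contourHist t m} y.natPred := by
    refine ⟨by simpa using ⟨hy, hy'⟩, fun k ⟨hk, hk'⟩ => ?_⟩
    by_contra! hlt'
    exact hk' (hlt _ (by rw [← PNat.coe_lt_coe]; simp [PNat.natPred] at hlt' ⊢; omega) hk)
  rw [contourHist, if_pos ⟨_, hleast.1⟩]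
  simp only [theta] at hleast ⊢
  rw [hleast.csInf_eq, PNat.succPNat_natPred]

lemma theta_succ_eq_dropLast_or_child (t : Finset Vertex) (m : ℕ) :
    theta t (m + 1) = (theta t m).dropLast ∨ ∃ c : ℕ+, theta t (m + 1) = theta t m ++ [c] := by
  rw [theta, theta, contourHist]
  split_ifs <;> simp

lemma treeDist_theta_le (t : Finset Vertex) {a b : ℕ} (hab : a ≤ b) :
    treeDist (theta t a) (theta t b) ≤ b - a := by
  induction b, hab using Nat.le_induction with
  | base => simp [treeDist_self]
  | succ b hab ih =>
    have hstep : treeDist (theta t b) (theta t (b + 1)) ≤ 1 := by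
      rcases theta_succ_eq_dropLast_or_child t b with h | ⟨c, h⟩ <;> rw [h]
      · exact treeDist_dropLast_le _
      · simp [treeDist_append_right]
    have := treeDist_triangle (theta t a) (theta t b) (theta t (b + 1))
    omega

lemma contourHist_subset {t : Finset Vertex} (ht : IsPlaneTreeSet t) :
    ∀ m, ∀ w ∈ contourHist t m, w ∈ t
  | 0 => by simpa [contourHist] using ht.1
  | m + 1 => by
    have ih := contourHist_subset ht m
    have hcur : theta t m ∈ t := ih _ (theta_mem_contourHist t m)
    rw [contourHist]
    split_ifs with h
    · simp only [List.mem_cons, forall_eq_or_imp]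
      exact ⟨(Nat.sInf_mem h).1, ih⟩
    · simp only [List.mem_cons, forall_eq_or_imp]
      exact ⟨ht.2.1 _ hcur _ (List.dropLast_prefix _), ih⟩

lemma theta_mem {t : Finset Vertex} (ht : IsPlaneTreeSet t) (m : ℕ) : theta t m ∈ t :=
  contourHist_subset ht m _ (theta_mem_contourHist t m)

section LexEnumeration

variable {t : Finset Vertex} {i j : ℕ} {w : Vertex}

lemma lexVertex_eq_orderEmbOfFin (hi : i < t.card) :
    lexVertex t i = t.orderEmbOfFin rfl ⟨i, hi⟩ := by
  simp [lexVertex, lexEnum, Finset.orderEmbOfFin_apply, List.getD_eq_getElem?_getD, hi]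

lemma lexVertex_of_card_le (hi : t.card ≤ i) : lexVertex t i = [] :=
  List.getD_eq_default _ _ (by simpa [lexEnum] using hi)

lemma lexVertex_mem (hi : i < t.card) : lexVertex t i ∈ t := by
  rw [lexVertex_eq_orderEmbOfFin hi]
  exact t.orderEmbOfFin_mem rfl _

lemma lexVertex_le_lexVertex_iff (hi : i < t.card) (hj : j < t.card) :
    lexVertex t i ≤ lexVertex t j ↔ i ≤ j := by
  rw [lexVertex_eq_orderEmbOfFin hi, lexVertex_eq_orderEmbOfFin hj, OrderEmbedding.le_iff_le,
    Fin.mk_le_mk]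

lemma lexVertex_lt_lexVertex_iff (hi : i < t.card) (hj : j < t.card) :
    lexVertex t i < lexVertex t j ↔ i < j := by
  rw [lexVertex_eq_orderEmbOfFin hi, lexVertex_eq_orderEmbOfFin hj, OrderEmbedding.lt_iff_lt,
    Fin.mk_lt_mk]

lemma exists_lexVertex_eq (hw : w ∈ t) : ∃ j < t.card, lexVertex t j = w := by
  have : w ∈ Set.range (t.orderEmbOfFin rfl) := by simpa using hw
  obtain ⟨⟨j, hj⟩, rfl⟩ := this
  exact ⟨j, hj, lexVertex_eq_orderEmbOfFin hj⟩

lemma lexVertex_zero (h : [] ∈ t) : lexVertex t 0 = [] := by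
  obtain ⟨j, hj, hjw⟩ := exists_lexVertex_eq h
  rw [← le_nil_iff, ← hjw, lexVertex_le_lexVertex_iff (by omega) hj]
  exact Nat.zero_le j

lemma le_lexVertex_card_sub_one (hw : w ∈ t) : w ≤ lexVertex t (t.card - 1) := by
  obtain ⟨j, hj, rfl⟩ := exists_lexVertex_eq hw
  rw [lexVertex_le_lexVertex_iff hj (by omega)]
  omega

lemma le_lexVertex_of_lt_lexVertex_succ (hi : i + 1 < t.card) (hw : w ∈ t)
    (h : w < lexVertex t (i + 1)) : w ≤ lexVertex t i := by
  obtain ⟨j, hj, rfl⟩ := exists_lexVertex_eq hw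
  rw [lexVertex_lt_lexVertex_iff hj hi] at h
  rw [lexVertex_le_lexVertex_iff hj (by omega)]
  omega

lemma lexVertex_succ_le_of_lt (hi : i + 1 < t.card) (hw : w ∈ t) (h : lexVertex t i < w) :
    lexVertex t (i + 1) ≤ w :=
  not_lt.mp fun h' => (le_lexVertex_of_lt_lexVertex_succ hi hw h').not_gt h

lemma exists_lexVertex_succ_eq (ht : IsPlaneTreeSet t) (hi : i + 1 < t.card) :
    ∃ p y, p <+: lexVertex t i ∧ lexVertex t (i + 1) = p ++ [y] ∧
      ∀ q, q <+: lexVertex t i → p.length < q.length →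
        ∀ c, q ++ [c] ∈ t → q ++ [c] ≤ lexVertex t i := by
  have hlt : lexVertex t i < lexVertex t (i + 1) :=
    (lexVertex_lt_lexVertex_iff (by omega) hi).2 (Nat.lt_succ_self i)
  obtain ⟨p, y, hp, hpy, hlt', hbranch⟩ := exists_branch_of_lt hlt
  have hsucc : lexVertex t (i + 1) = p ++ [y] :=
    le_antisymm (lexVertex_succ_le_of_lt hi (ht.2.1 _ (lexVertex_mem hi) _ hpy) hlt')
      (le_of_isPrefix hpy)
  refine ⟨p, y, hp, hsucc, fun q hq hlen c hc => ?_⟩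
  exact le_lexVertex_of_lt_lexVertex_succ hi hc (hsucc ▸ hbranch q hq hlen c)

lemma length_lexVertex_le (ht : IsPlaneTreeSet t) : ∀ i < t.card, (lexVertex t i).length ≤ i
  | 0, _ => by simp [lexVertex_zero ht.1]
  | i + 1, hi => by
    obtain ⟨p, y, hp, hsucc, -⟩ := exists_lexVertex_succ_eq ht hi
    have := length_lexVertex_le ht i (by omega)
    rw [hsucc, List.length_append, List.length_singleton]
    have := hp.length_le
    omega

end LexEnumeration

section ContourAtLexTimes

variable {t : Finset Vertex}

def VisitedUpTo (t : Finset Vertex) (m : ℕ) (v : Vertex) : Prop :=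
  ∀ w, w ∈ contourHist t m ↔ w ∈ t ∧ w ≤ v

lemma theta_add_eq_of_climb (ht : IsPlaneTreeSet t) {v p : Vertex} (hv : v ∈ t) (hp : p <+: v)
    (hdone : ∀ q, q <+: v → p.length < q.length → ∀ c, q ++ [c] ∈ t → q ++ [c] ≤ v) :
    ∀ r m, p.length + r ≤ v.length → theta t m = v.take (p.length + r) → VisitedUpTo t m v →
      theta t (m + r) = p ∧ VisitedUpTo t (m + r) v
  | 0, m, _, hm, hvis => ⟨by simpa [hm] using (List.prefix_iff_eq_take.1 hp).symm, hvis⟩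
  | r + 1, m, hr, hm, hvis => by
    have hq : theta t m <+: v := hm ▸ List.take_prefix _ _
    have hstep : contourHist t (m + 1) = (theta t m).dropLast :: contourHist t m :=
      contourHist_succ_of_forall_mem fun c hc =>
        (hvis _).2 ⟨hc, hdone _ hq (by rw [hm, List.length_take_of_le hr]; omega) c hc⟩
    have hup : theta t (m + 1) = v.take (p.length + r) := by
      rw [theta, hstep, List.headI_cons, hm, List.dropLast_eq_take, List.take_take,
        List.length_take_of_le hr]
      congr 1
      omega
    have hvis' : VisitedUpTo t (m + 1) v := fun w => by
      rw [hstep, List.mem_cons, hvis]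
      constructor
      · rintro (rfl | hw)
        · exact ⟨ht.2.1 _ hv _ ((List.dropLast_prefix _).trans hq),
            le_of_isPrefix ((List.dropLast_prefix _).trans hq)⟩
        · exact hw
      · exact Or.inr
    rw [show m + (r + 1) = m + 1 + r by omega]
    exact theta_add_eq_of_climb ht hv hp hdone r (m + 1) (by omega) hup hvis'

/-- `v_{i+1}` is the first child of `p` that the contour has not visited yet. -/
lemma theta_succ_eq_lexVertex_succ {i m : ℕ} {p : Vertex} {y : ℕ+} (hi : i + 1 < t.card)
    (hsucc : lexVertex t (i + 1) = p ++ [y]) (hm : theta t m = p)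
    (hvis : VisitedUpTo t m (lexVertex t i)) :
    theta t (m + 1) = lexVertex t (i + 1) ∧ VisitedUpTo t (m + 1) (lexVertex t (i + 1)) := by
  have hlt : lexVertex t i < lexVertex t (i + 1) :=
    (lexVertex_lt_lexVertex_iff (by omega) hi).2 (Nat.lt_succ_self i)
  have hstep : contourHist t (m + 1) = lexVertex t (i + 1) :: contourHist t m := by
    rw [hsucc, ← hm]
    refine contourHist_succ_of_isLeast ?_ ?_ fun z hz hzt => (hvis _).2 ⟨hzt, ?_⟩
    · rw [hm, ← hsucc]; exact lexVertex_mem hi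
    · rw [hvis, hm, ← hsucc]; exact fun h => h.2.not_gt hlt
    · refine le_lexVertex_of_lt_lexVertex_succ hi hzt ?_
      rw [hsucc, hm]
      exact List.append_left_lt (List.cons_lt_cons_iff.2 (Or.inl hz))
  refine ⟨by rw [theta, hstep, List.headI_cons], fun w => ?_⟩
  rw [hstep, List.mem_cons, hvis]
  constructor
  · rintro (rfl | ⟨hw, hwv⟩)
    · exact ⟨lexVertex_mem hi, le_rfl⟩
    · exact ⟨hw, hwv.trans hlt.le⟩
  · rintro ⟨hw, hwv⟩
    rcases hwv.lt_or_eq with hwv | rfl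
    · exact Or.inr ⟨hw, le_lexVertex_of_lt_lexVertex_succ hi hw hwv⟩
    · exact Or.inl rfl

lemma jIdx_of_lt {i : ℕ} (hi : i < t.card) : jIdx t i = 2 * i - (lexVertex t i).length :=
  if_pos hi

lemma jIdx_of_card_le {i : ℕ} (hi : t.card ≤ i) : jIdx t i = 2 * t.card - 2 :=
  if_neg (not_lt.mpr hi)

lemma theta_jIdx_of_lt (ht : IsPlaneTreeSet t) :
    ∀ i < t.card, theta t (jIdx t i) = lexVertex t i ∧ VisitedUpTo t (jIdx t i) (lexVertex t i)
  | 0, h0 => by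
    have hj : jIdx t 0 = 0 := by simp [jIdx_of_lt h0]
    rw [hj, lexVertex_zero ht.1]
    refine ⟨rfl, fun w => ?_⟩
    simp only [contourHist, List.mem_singleton, le_nil_iff]
    exact ⟨fun h => ⟨h ▸ ht.1, h⟩, And.right⟩
  | i + 1, hi => by
    obtain ⟨hθ, hvis⟩ := theta_jIdx_of_lt ht i (by omega)
    obtain ⟨p, y, hp, hsucc, hdone⟩ := exists_lexVertex_succ_eq ht hi
    have hpv := hp.length_le
    have hvi := length_lexVertex_le ht i (by omega)
    obtain ⟨hθp, hvisp⟩ := theta_add_eq_of_climb ht (lexVertex_mem (by omega)) hp hdone _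
      (jIdx t i) (Nat.add_sub_of_le hpv).le
      (by rw [hθ, Nat.add_sub_of_le hpv, List.take_length]) hvis
    have hj : jIdx t (i + 1) = jIdx t i + ((lexVertex t i).length - p.length) + 1 := by
      rw [jIdx_of_lt hi, jIdx_of_lt (by omega), hsucc, List.length_append,
        List.length_singleton]
      omega
    rw [hj]
    exact theta_succ_eq_lexVertex_succ hi hsucc hθp hvisp

/-- From `v_{|t|-1}` the contour climbs straight back to the root. -/
lemma theta_two_mul_card_sub_two (ht : IsPlaneTreeSet t) : theta t (2 * t.card - 2) = [] := by
  have hcard : 0 < t.card := Finset.card_pos.2 ⟨_, ht.1⟩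
  obtain ⟨hθ, hvis⟩ := theta_jIdx_of_lt ht (t.card - 1) (by omega)
  have hlen := length_lexVertex_le ht (t.card - 1) (by omega)
  have hclimb := theta_add_eq_of_climb ht (lexVertex_mem (by omega)) List.nil_prefix
    (fun q _ _ c hc => le_lexVertex_card_sub_one hc) (lexVertex t (t.card - 1)).length
    (jIdx t (t.card - 1)) (by simp)
    (by rw [hθ, List.length_nil, Nat.zero_add, List.take_length]) hvis
  rw [← hclimb.1, jIdx_of_lt (by omega)]
  congr 1
  omega

lemma theta_jIdx (ht : IsPlaneTreeSet t) {i : ℕ} (hi : i ≤ t.card) :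
    theta t (jIdx t i) = lexVertex t i := by
  rcases hi.lt_or_eq with hi | rfl
  · exact (theta_jIdx_of_lt ht i hi).1
  · rw [jIdx_of_card_le le_rfl, lexVertex_of_card_le le_rfl, theta_two_mul_card_sub_two ht]

lemma jIdx_succ_le (ht : IsPlaneTreeSet t) {i : ℕ} (hi : i < t.card) :
    jIdx t (i + 1) ≤ jIdx t i + 2 + treeDist (lexVertex t i) (lexVertex t (i + 1)) := by
  have hlen := length_lexVertex_le ht i hi
  rw [jIdx_of_lt hi]
  rcases Nat.lt_or_ge (i + 1) t.card with hi1 | hi1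
  · have := lcpLen_le_length_right (lexVertex t i) (lexVertex t (i + 1))
    rw [jIdx_of_lt hi1, treeDist]
    omega
  · rw [jIdx_of_card_le hi1, lexVertex_of_card_le hi1, treeDist_nil_right]
    omega

end ContourAtLexTimes

section Interpolation

variable {n : ℕ} {f : ℕ → ℝ} {s : ℝ}

lemma interpFun_eq_of_floor_lt (hs : 0 ≤ s * n) (h : ⌊s * n⌋₊ < n) :
    interpFun n f s =
      f ⌊s * n⌋₊ + (s * n - ⌊s * n⌋₊) * (f (⌊s * n⌋₊ + 1) - f ⌊s * n⌋₊) := by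
  set i := ⌊s * n⌋₊
  have hil : (i : ℝ) ≤ s * n := Nat.floor_le hs
  have hiu : s * n < i + 1 := Nat.lt_floor_add_one _
  have hbelow : ∑ k ∈ Finset.range i, (f (k + 1) - f k) * max 0 (min 1 (s * n - k)) =
      f i - f 0 := by
    rw [← Finset.sum_range_sub]
    refine Finset.sum_congr rfl fun k hk => ?_
    have : (k : ℝ) + 1 ≤ i := by exact_mod_cast Finset.mem_range.1 hk
    rw [min_eq_left (by linarith), max_eq_right zero_le_one, mul_one]
  have habove : ∑ k ∈ Finset.Ico (i + 1) n, (f (k + 1) - f k) * max 0 (min 1 (s * n - k)) =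
      0 := Finset.sum_eq_zero fun k hk => by
    have : (i : ℝ) + 1 ≤ k := by exact_mod_cast (Finset.mem_Ico.1 hk).1
    rw [min_eq_right (by linarith), max_eq_left (by linarith), mul_zero]
  rw [interpFun, ← Finset.sum_range_add_sum_Ico _ h, Finset.sum_range_succ, hbelow, habove,
    min_eq_right (by linarith), max_eq_right (by linarith)]
  ring

lemma interpFun_eq_of_le_floor (hs : 0 ≤ s * n) (h : n ≤ ⌊s * n⌋₊) : interpFun n f s = f n := by
  have hn : (n : ℝ) ≤ s * n := (Nat.le_floor_iff hs).1 h
  rw [interpFun, Finset.sum_congr rfl fun k hk => ?_, Finset.sum_range_sub]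
  · ring
  · have : (k : ℝ) + 1 ≤ n := by exact_mod_cast Finset.mem_range.1 hk
    rw [min_eq_left (by linarith), max_eq_right zero_le_one, mul_one]

lemma interpFun_natCast_div (hn : n ≠ 0) {i : ℕ} (hi : i ≤ n) :
    interpFun n f (i / n) = f i := by
  have hx : (i : ℝ) / n * n = i := div_mul_cancel₀ _ (Nat.cast_ne_zero.2 hn)
  rcases hi.lt_or_eq with hi | rfl
  · rw [interpFun_eq_of_floor_lt] <;> simp [hx, hi]
  · rw [interpFun_eq_of_le_floor] <;> simp [hx]

/-- On `[0,1]` the interpolation at `s` is a convex combination of the values `f k` at the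
integers `k` within distance `1` of `s * n`. -/
lemma abs_interpFun_sub_le (hs0 : 0 ≤ s) (hs1 : s ≤ 1) {z B : ℝ}
    (h : ∀ k ≤ n, |(k : ℝ) - s * n| < 1 → |f k - z| ≤ B) : |interpFun n f s - z| ≤ B := by
  have hx0 : 0 ≤ s * n := by positivity
  have hxn : s * n ≤ n := mul_le_of_le_one_left (Nat.cast_nonneg _) hs1
  have hil : (⌊s * n⌋₊ : ℝ) ≤ s * n := Nat.floor_le hx0
  have hiu : s * n < ⌊s * n⌋₊ + 1 := Nat.lt_floor_add_one _
  rcases lt_or_ge ⌊s * n⌋₊ n with hin | hin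
  · rw [interpFun_eq_of_floor_lt hx0 hin]
    set i := ⌊s * n⌋₊
    set c := s * n - i
    have hfi : |f i - z| ≤ B := h i hin.le (by rw [abs_lt]; constructor <;> linarith)
    rw [show f i + c * (f (i + 1) - f i) - z = (1 - c) * (f i - z) + c * (f (i + 1) - z) by ring]
    rcases (show 0 ≤ c by linarith).eq_or_lt with hc0 | hc0
    · rw [← hc0]
      simpa using hfi
    have hfi1 : |f (i + 1) - z| ≤ B :=
      h (i + 1) hin (by push_cast; rw [abs_lt]; constructor <;> linarith)
    calc |(1 - c) * (f i - z) + c * (f (i + 1) - z)|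
        ≤ (1 - c) * |f i - z| + c * |f (i + 1) - z| := by
          refine (abs_add_le _ _).trans_eq ?_
          rw [abs_mul, abs_mul, abs_of_nonneg (by linarith), abs_of_pos hc0]
      _ ≤ (1 - c) * B + c * B := by gcongr; linarith
      _ = B := by ring
  · rw [interpFun_eq_of_le_floor hx0 hin]
    have : (n : ℝ) ≤ ⌊s * n⌋₊ := by exact_mod_cast hin
    exact h n le_rfl (by rw [abs_lt]; constructor <;> linarith)

end Interpolation

def alpha (t : Finset Vertex) : ℕ :=
  2 + (Finset.range t.card).sup fun i => treeDist (lexVertex t i) (lexVertex t (i + 1))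

lemma exists_phi_eq {t : Finset Vertex} (hcard : 0 < t.card) {s : ℝ} (hs : 0 ≤ s) :
    ∃ i ≤ t.card, phi t s = i / t.card ∧ (jIdx t i : ℝ) ≤ s * (2 * t.card - 2 : ℕ) ∧
      (i < t.card → s * (2 * t.card - 2 : ℕ) < jIdx t (i + 1)) := by
  set A := {i : ℕ | i ≤ t.card ∧ (jIdx t i : ℝ) ≤ s * (2 * t.card - 2)}
  have hN : ((2 * t.card - 2 : ℕ) : ℝ) = 2 * t.card - 2 := by
    rw [Nat.cast_sub (by omega)]
    push_cast
    ring
  have hA : BddAbove A := ⟨t.card, fun _ h => h.1⟩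
  have h0 : 0 ∈ A := ⟨Nat.zero_le _, by
    rw [← hN, jIdx_of_lt hcard, Nat.mul_zero, Nat.zero_sub, Nat.cast_zero]
    positivity⟩
  obtain ⟨hle, hj⟩ := Nat.sSup_mem ⟨0, h0⟩ hA
  refine ⟨sSup A, hle, rfl, hN ▸ hj, fun hlt => ?_⟩
  by_contra! hnext
  have := le_csSup hA ⟨hlt, hN ▸ hnext⟩
  omega

/-- The contour is at `v_i` at time `j_t(i)`, and `j_t(i) ≤ k ≤ j_t(i+1) ≤ j_t(i) + α_t`. -/
lemma treeDist_lexVertex_theta_le {t : Finset Vertex} (ht : IsPlaneTreeSet t) {i k : ℕ} {x : ℝ}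
    (hi : i ≤ t.card) (hk : k ≤ 2 * t.card - 2) (hlow : (jIdx t i : ℝ) ≤ x)
    (hhigh : i < t.card → x < jIdx t (i + 1)) (hkx : |(k : ℝ) - x| < 1) :
    treeDist (lexVertex t i) (theta t k) ≤ alpha t := by
  rw [abs_lt] at hkx
  have hjk : jIdx t i ≤ k := by
    have : (jIdx t i : ℝ) < k + 1 := by linarith
    exact_mod_cast Nat.lt_succ_iff.1 (by exact_mod_cast this)
  have hkj : k ≤ jIdx t i + alpha t := by
    rcases hi.lt_or_eq with hi | rfl
    · have hstep : treeDist (lexVertex t i) (lexVertex t (i + 1)) ≤ alpha t - 2 := by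
        simp only [alpha, Nat.add_sub_cancel_left]
        exact Finset.le_sup (f := fun i => treeDist (lexVertex t i) (lexVertex t (i + 1)))
          (Finset.mem_range.2 hi)
      have : (k : ℝ) < jIdx t (i + 1) + 1 := by linarith [hhigh hi]
      have : k ≤ jIdx t (i + 1) := Nat.lt_succ_iff.1 (by exact_mod_cast this)
      have := jIdx_succ_le ht hi
      have : 2 ≤ alpha t := Nat.le_add_right _ _
      omega
    · rw [jIdx_of_card_le le_rfl]
      omega
  rw [← theta_jIdx ht hi]
  exact (treeDist_theta_le t hjk).trans (by omega)

lemma abs_labelOf_sub_le_sSup {S : Type*} (T : MTree S) {P : Vertex → Vertex → Prop} {u v : Vertex}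
    (hu : u ∈ T.verts) (hv : v ∈ T.verts) (huv : P u v) :
    |labelOf T u - labelOf T v| ≤
      sSup {x : ℝ | ∃ u ∈ T.verts, ∃ v ∈ T.verts, P u v ∧ x = |labelOf T u - labelOf T v|} := by
  refine le_csSup (BddAbove.mono ?_ ((T.verts ×ˢ T.verts).finite_toSet.image
    fun p => |labelOf T p.1 - labelOf T p.2|).bddAbove) ⟨u, hu, v, hv, huv, rfl⟩
  rintro _ ⟨u, hu, v, hv, -, rfl⟩
  exact ⟨(u, v), by simp [hu, hv], rfl⟩

/-- equation (3.2) in the proof of Proposition 3.7. With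
`α_t = 2 + max_{0 ≤ i < |t|} dist_t(v_i, v_{i+1})`,
`sup_{0 ≤ s ≤ 1} |Z_t(s) - S_t(φ_t(s))| ≤ max{|ℓ(u) - ℓ(v)| : u, v ∈ V(t), dist_t(u,v) ≤ α_t}`. -/
theorem statement17 {S : Type*} (T : MTree S) (hT : T.IsPlaneTree) :
    ∀ s ∈ Set.Icc (0:ℝ) 1,
      |labelFun T s - lexLabelFun T (phi T.verts s)|
        ≤ sSup {x : ℝ | ∃ u ∈ T.verts, ∃ v ∈ T.verts,
            treeDist u v ≤ 2 + ((Finset.range T.verts.card).sup fun i =>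
              treeDist (lexVertex T.verts i) (lexVertex T.verts (i + 1)))
            ∧ x = |labelOf T u - labelOf T v|} := by
  rintro s ⟨hs0, hs1⟩
  have hcard : 0 < T.verts.card := Finset.card_pos.2 ⟨_, hT.1⟩
  obtain ⟨i, hi, hphi, hlow, hhigh⟩ := exists_phi_eq hcard hs0
  rw [lexLabelFun, hphi, interpFun_natCast_div hcard.ne' hi]
  refine abs_interpFun_sub_le hs0 hs1 fun k hk hkx => ?_
  rw [abs_sub_comm]
  refine abs_labelOf_sub_le_sSup T ?_ (theta_mem hT k)
    (treeDist_lexVertex_theta_le hT hi hk hlow hhigh hkx)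
  rw [← theta_jIdx hT hi]
  exact theta_mem hT _

end TreeSym
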